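/- arXiv:1604.02578 — 2 statements merged into one kernel-verified Lean document; each statement's English description precedes it below -/
import Mathlib

section
/- Let (M_k)_{k≥1} be invertible real n×n matrices, (Ω_k)_{k≥0} real symmetric positive semi-definite n×n matrices, and P_0 any real symmetric positive semi-definite n×n matrix (possibly rank-deficient). Define P_{k+1} = M_{k+1}(I + P_kΩ_k)⁻¹P_kM_{k+1}ᵀ. Let M_{k:l} = M_k⋯M_{l+1} (with M_{k:k} = I) and Γ_k = Σ_{l=0}^{k-1} M_{k:l}^{-ᵀ}Ω_lM_{k:l}^{-1}. Then for every k ≥ 0 the matrix I + Γ_kM_{k:0}P_0M_{k:0}ᵀ is invertible and P_k = M_{k:0}P_0M_{k:0}ᵀ(I + Γ_kM_{k:0}P_0M_{k:0}ᵀ)⁻¹. -/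
/-!
Write `S_k = M_{k:0} P_0 M_{k:0}ᵀ`. By the push-through identity `(1 + PΩ)⁻¹P = P(1 + ΩP)⁻¹`, one
analysis step turns `P = S(1 + ΓS)⁻¹` into `S(1 + (Γ + Ω)S)⁻¹`, i.e. it adds `Ω` to the
information, and the forecast by `M` conjugates `S` by `M` and `Γ + Ω` by `M⁻ᵀ`, which preserves
this form. Invertibility of `1 + Γ_k S_k` does not go through `P_k`: both factors are positive
semi-definite, and for `A = CᴴC` we have `det (1 + AB) = det (1 + CBCᴴ) > 0`.
-/

open Matrix

/-- `Mres M l j` is the resolvent `M_{(l+j):l} = M_{l+j} ⋯ M_{l+1}`, so that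
`M_{k:l} = Mres M l (k - l)` for `k ≥ l`, and `M_{k:k} = 1`. -/
def Mres {n : ℕ} (M : ℕ → Matrix (Fin n) (Fin n) ℝ) (l : ℕ) :
    ℕ → Matrix (Fin n) (Fin n) ℝ
  | 0 => 1
  | j + 1 => M (l + j + 1) * Mres M l j

/-- The information matrix `Γ_k = Σ_{l=0}^{k-1} M_{k:l}⁻ᵀ * Ω_l * M_{k:l}⁻¹`. -/
noncomputable def Gamma {n : ℕ} (M Ω : ℕ → Matrix (Fin n) (Fin n) ℝ) (k : ℕ) :
    Matrix (Fin n) (Fin n) ℝ :=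
  ∑ l ∈ Finset.range k, ((Mres M l (k - l))⁻¹)ᵀ * Ω l * (Mres M l (k - l))⁻¹

namespace Matrix

variable {n R 𝕜 : Type*} [Fintype n] [DecidableEq n]

section CommRing

variable [CommRing R]

/-- Holds without invertibility: `1 + A * B` and `1 + B * A` have the same determinant, so if
one is singular both inverses are `0`. -/
theorem inv_one_add_mul_mul_eq_mul_inv_one_add_mul (A B : Matrix n n R) :
    (1 + A * B)⁻¹ * A = A * (1 + B * A)⁻¹ := by
  have hcomm : (1 + A * B) * A = A * (1 + B * A) := by noncomm_ring
  by_cases h : IsUnit (1 + A * B).det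
  · have h' : IsUnit (1 + B * A).det := by rwa [← det_one_add_mul_comm]
    calc (1 + A * B)⁻¹ * A = (1 + A * B)⁻¹ * ((1 + A * B) * A) * (1 + B * A)⁻¹ := by
          rw [hcomm, Matrix.mul_assoc, Matrix.mul_assoc, mul_nonsing_inv _ h', Matrix.mul_one]
      _ = A * (1 + B * A)⁻¹ := by rw [← Matrix.mul_assoc, nonsing_inv_mul _ h, Matrix.one_mul]
  · have h' : ¬IsUnit (1 + B * A).det := by rwa [← det_one_add_mul_comm]
    rw [nonsing_inv_apply_not_isUnit _ h, nonsing_inv_apply_not_isUnit _ h', Matrix.zero_mul,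
      Matrix.mul_zero]

theorem inv_one_add_mul_mul_of_eq_mul_inv {S Γ Ω P : Matrix n n R}
    (hU : IsUnit (1 + Γ * S)) (hP : P = S * (1 + Γ * S)⁻¹) :
    (1 + P * Ω)⁻¹ * P = S * (1 + (Γ + Ω) * S)⁻¹ := by
  have hsum : (1 + Ω * P) * (1 + Γ * S) = 1 + (Γ + Ω) * S := by
    rw [hP, Matrix.add_mul, Matrix.one_mul, Matrix.mul_assoc, Matrix.mul_assoc,
      nonsing_inv_mul _ ((isUnit_iff_isUnit_det _).1 hU)]
    noncomm_ring
  rw [inv_one_add_mul_mul_eq_mul_inv_one_add_mul, ← hsum, mul_inv_rev, hP, Matrix.mul_assoc]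

theorem mul_mul_inv_one_add_mul_conj {M N X Y : Matrix n n R} (hM : IsUnit M) (hN : IsUnit N) :
    M * Y * N * (1 + N⁻¹ * X * M⁻¹ * (M * Y * N))⁻¹ = M * (Y * (1 + X * Y)⁻¹) * N := by
  have hM' := (isUnit_iff_isUnit_det M).1 hM
  have hN' := (isUnit_iff_isUnit_det N).1 hN
  have hconj : 1 + N⁻¹ * X * M⁻¹ * (M * Y * N) = N⁻¹ * (1 + X * Y) * N := by
    simp only [Matrix.mul_add, Matrix.add_mul, Matrix.mul_one, Matrix.mul_assoc,
      nonsing_inv_mul_cancel_left _ _ hM', nonsing_inv_mul _ hN']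
  rw [hconj, mul_inv_rev, mul_inv_rev, nonsing_inv_nonsing_inv _ hN']
  simp only [Matrix.mul_assoc, mul_nonsing_inv_cancel_left _ _ hN']

end CommRing

open scoped ComplexOrder MatrixOrder in
theorem PosSemidef.isUnit_one_add_mul [RCLike 𝕜] {A B : Matrix n n 𝕜} (hA : A.PosSemidef)
    (hB : B.PosSemidef) : IsUnit (1 + A * B) := by
  obtain ⟨C, rfl⟩ := CStarAlgebra.nonneg_iff_eq_star_mul_self.mp hA.nonneg
  rw [isUnit_iff_isUnit_det, Matrix.mul_assoc, det_one_add_mul_comm, ← isUnit_iff_isUnit_det,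
    star_eq_conjTranspose]
  exact (PosDef.one.add_posSemidef (hB.mul_mul_conjTranspose_same C)).isUnit

end Matrix

section Kalman

variable {n : ℕ} (M Ω : ℕ → Matrix (Fin n) (Fin n) ℝ)

theorem Mres_sub_succ {l k : ℕ} (hlk : l ≤ k) :
    Mres M l (k + 1 - l) = M (k + 1) * Mres M l (k - l) := by
  rw [Nat.sub_add_comm hlk, Mres, Nat.add_sub_cancel' hlk]

theorem Mres_zero_succ_mul_mul_transpose (A : Matrix (Fin n) (Fin n) ℝ) (k : ℕ) :
    Mres M 0 (k + 1) * A * (Mres M 0 (k + 1))ᵀ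
      = M (k + 1) * (Mres M 0 k * A * (Mres M 0 k)ᵀ) * (M (k + 1))ᵀ := by
  simp only [Mres, zero_add, transpose_mul, Matrix.mul_assoc]

theorem Gamma_succ (k : ℕ) :
    Gamma M Ω (k + 1) = ((M (k + 1))⁻¹)ᵀ * (Gamma M Ω k + Ω k) * (M (k + 1))⁻¹ := by
  have hterm : ∀ l ∈ Finset.range (k + 1),
      ((Mres M l (k + 1 - l))⁻¹)ᵀ * Ω l * (Mres M l (k + 1 - l))⁻¹
        = ((M (k + 1))⁻¹)ᵀ * (((Mres M l (k - l))⁻¹)ᵀ * Ω l * (Mres M l (k - l))⁻¹)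
          * (M (k + 1))⁻¹ := by
    intro l hl
    rw [Mres_sub_succ M (Finset.mem_range_succ_iff.1 hl), Matrix.mul_inv_rev, transpose_mul]
    simp only [Matrix.mul_assoc]
  rw [Gamma, Finset.sum_congr rfl hterm, ← Finset.sum_mul, ← Finset.mul_sum,
    Finset.sum_range_succ, Nat.sub_self]
  simp only [Mres, inv_one, transpose_one, Matrix.one_mul, Matrix.mul_one, Gamma]

theorem Gamma_posSemidef (hΩ : ∀ k, (Ω k).PosSemidef) (k : ℕ) : (Gamma M Ω k).PosSemidef :=
  posSemidef_sum _ fun l _ => by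
    simpa only [conjTranspose_eq_transpose_of_trivial]
      using (hΩ l).conjTranspose_mul_mul_same (Mres M l (k - l))⁻¹

end Kalman

/-- Closed form of the perfect-model Kalman filter covariance for a possibly
rank-deficient initial covariance `P_0`:
`P_k = M_{k:0} P_0 M_{k:0}ᵀ (I + Γ_k M_{k:0} P_0 M_{k:0}ᵀ)⁻¹`,
where the indicated inverse exists. -/
theorem kf_closed_form {n : ℕ}
    (M Ω : ℕ → Matrix (Fin n) (Fin n) ℝ)
    (hM : ∀ k, 1 ≤ k → IsUnit (M k)) (hΩ : ∀ k, (Ω k).PosSemidef)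
    (P : ℕ → Matrix (Fin n) (Fin n) ℝ) (hP0 : (P 0).PosSemidef)
    (hrec : ∀ k, P (k + 1)
      = M (k + 1) * (1 + P k * Ω k)⁻¹ * P k * (M (k + 1))ᵀ) :
    ∀ k, IsUnit (1 + Gamma M Ω k * (Mres M 0 k * P 0 * (Mres M 0 k)ᵀ)) ∧
      P k = Mres M 0 k * P 0 * (Mres M 0 k)ᵀ
        * (1 + Gamma M Ω k * (Mres M 0 k * P 0 * (Mres M 0 k)ᵀ))⁻¹ := by
  have hU : ∀ k, IsUnit (1 + Gamma M Ω k * (Mres M 0 k * P 0 * (Mres M 0 k)ᵀ)) := fun k =>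
    (Gamma_posSemidef M Ω hΩ k).isUnit_one_add_mul <| by
      simpa only [conjTranspose_eq_transpose_of_trivial]
        using hP0.mul_mul_conjTranspose_same (Mres M 0 k)
  intro k
  refine ⟨hU k, ?_⟩
  induction k with
  | zero => simp [Mres, Gamma]
  | succ k ih =>
    have hMk : IsUnit (M (k + 1)) := hM (k + 1) k.succ_pos
    rw [hrec, Matrix.mul_assoc (M (k + 1)), inv_one_add_mul_mul_of_eq_mul_inv (hU k) ih,
      Mres_zero_succ_mul_mul_transpose, Gamma_succ, transpose_nonsing_inv,
      mul_mul_inv_one_add_mul_conj hMk ((isUnit_transpose _).2 hMk)]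
end

section
/- Let (M_k)_{k≥1} be invertible real n×n matrices, (Ω_k)_{k≥0} real symmetric positive semi-definite n×n matrices, and P_0 any real symmetric positive semi-definite n×n matrix. Define P_{k+1} = M_{k+1}(I + P_kΩ_k)⁻¹P_kM_{k+1}ᵀ. Let M_{l:0} = M_l⋯M_1 (with M_{0:0} = I) and Θ_k = Σ_{l=0}^{k-1} M_{l:0}ᵀΩ_lM_{l:0}. Then for every k ≥ 0 the matrix I + Θ_kP_0 is invertible and P_k = M_{k:0}P_0(I + Θ_kP_0)⁻¹M_{k:0}ᵀ. -/
open Matrix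

/-- The observability matrix pulled back to initial time:
`Θ_k = Σ_{l=0}^{k-1} M_{l:0}ᵀ * Ω_l * M_{l:0}`. -/
noncomputable def Theta {n : ℕ} (M Ω : ℕ → Matrix (Fin n) (Fin n) ℝ) (k : ℕ) :
    Matrix (Fin n) (Fin n) ℝ :=
  ∑ l ∈ Finset.range k, (Mres M 0 l)ᵀ * Ω l * Mres M 0 l

/-! Write `B_k = I + Θ_k P_0`, so that `B_{k+1} = B_k + M_{k:0}ᵀ Ω_k M_{k:0} P_0`. Substituting
`P_k = M_{k:0} P_0 B_k⁻¹ M_{k:0}ᵀ` into the recurrence, the push-through identity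
`(I + P_k Ω_k) M_{k:0} P_0 B_{k+1}⁻¹ M_{k:0}ᵀ = P_k` gives the closed form for `P_{k+1}`.
Each `B_k` is invertible because `Θ_k` and `P_0` are positive semi-definite, and the
Weinstein–Aronszajn identity `det (I + XY) = det (I + YX)` turns `det (I + P_k Ω_k)` into
`det (B_{k+1} B_k⁻¹)`, so `I + P_k Ω_k` is invertible as well. -/

open scoped MatrixOrder ComplexOrder in
theorem Matrix.PosSemidef.isUnit_one_add_mul_s8 {ι 𝕜 : Type*} [Fintype ι] [DecidableEq ι] [RCLike 𝕜]
    {S T : Matrix ι ι 𝕜} (hS : S.PosSemidef) (hT : T.PosSemidef) : IsUnit (1 + S * T) := by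
  obtain ⟨B, rfl⟩ := CStarAlgebra.nonneg_iff_eq_star_mul_self.mp hS.nonneg
  rw [isUnit_iff_isUnit_det, star_eq_conjTranspose, Matrix.mul_assoc, det_one_add_mul_comm,
    ← isUnit_iff_isUnit_det]
  exact (PosDef.one.add_posSemidef (hT.mul_mul_conjTranspose_same B)).isUnit

section Update

variable {ι R : Type*} [Fintype ι] [DecidableEq ι] [CommRing R] {A C P Ω B : Matrix ι ι R}

theorem Matrix.isUnit_one_add_mul_inv_mul (hB : IsUnit B) (hB' : IsUnit (B + C * Ω * A * P)) :
    IsUnit (1 + A * P * B⁻¹ * C * Ω) := by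
  have hB'B : 1 + C * Ω * (A * P * B⁻¹) = (B + C * Ω * A * P) * B⁻¹ := by
    rw [Matrix.add_mul, mul_nonsing_inv B ((isUnit_iff_isUnit_det B).mp hB)]
    simp only [Matrix.mul_assoc]
  rw [isUnit_iff_isUnit_det, Matrix.mul_assoc (A * P * B⁻¹), det_one_add_mul_comm, hB'B,
    ← isUnit_iff_isUnit_det]
  exact hB'.mul (isUnit_nonsing_inv_iff.mpr hB)

theorem Matrix.inv_one_add_mul_inv_mul (hB : IsUnit B) (hB' : IsUnit (B + C * Ω * A * P)) :
    (1 + A * P * B⁻¹ * C * Ω)⁻¹ * (A * P * B⁻¹ * C) = A * P * (B + C * Ω * A * P)⁻¹ * C := by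
  set B' := B + C * Ω * A * P with hB'_def
  have hpush : (1 + A * P * B⁻¹ * C * Ω) * (A * P * B'⁻¹ * C) = A * P * B⁻¹ * C :=
    calc (1 + A * P * B⁻¹ * C * Ω) * (A * P * B'⁻¹ * C)
        = A * P * (B⁻¹ * B) * B'⁻¹ * C + A * P * B⁻¹ * C * Ω * A * P * B'⁻¹ * C := by
          rw [nonsing_inv_mul B ((isUnit_iff_isUnit_det B).mp hB)]; noncomm_ring
      _ = A * P * B⁻¹ * (B' * B'⁻¹) * C := by rw [hB'_def]; noncomm_ring
      _ = A * P * B⁻¹ * C := by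
          rw [mul_nonsing_inv B' ((isUnit_iff_isUnit_det B').mp hB'), Matrix.mul_one]
  calc (1 + A * P * B⁻¹ * C * Ω)⁻¹ * (A * P * B⁻¹ * C)
      = (1 + A * P * B⁻¹ * C * Ω)⁻¹ * ((1 + A * P * B⁻¹ * C * Ω) * (A * P * B'⁻¹ * C)) := by
        rw [hpush]
    _ = A * P * B'⁻¹ * C :=
        nonsing_inv_mul_cancel_left _ _
          ((isUnit_iff_isUnit_det _).mp (isUnit_one_add_mul_inv_mul hB hB'))

end Update

section Kalman

variable {n : ℕ} (M Ω : ℕ → Matrix (Fin n) (Fin n) ℝ)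

theorem Mres_zero_succ (k : ℕ) : Mres M 0 (k + 1) = M (k + 1) * Mres M 0 k := by
  rw [Mres, zero_add]

theorem Theta_succ (k : ℕ) :
    Theta M Ω (k + 1) = Theta M Ω k + (Mres M 0 k)ᵀ * Ω k * Mres M 0 k :=
  Finset.sum_range_succ _ _

variable {M Ω}

theorem posSemidef_Theta (hΩ : ∀ k, (Ω k).PosSemidef) (k : ℕ) : (Theta M Ω k).PosSemidef :=
  posSemidef_sum _ fun l _ ↦ by
    simpa only [conjTranspose_eq_transpose_of_trivial] using
      (hΩ l).conjTranspose_mul_mul_same (Mres M 0 l)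

end Kalman

theorem kf_closed_form_theta_general {n : ℕ}
    (M Ω : ℕ → Matrix (Fin n) (Fin n) ℝ)
    (hΩ : ∀ k, (Ω k).PosSemidef)
    (P : ℕ → Matrix (Fin n) (Fin n) ℝ) (hP0 : (P 0).PosSemidef)
    (hrec : ∀ k, P (k + 1)
      = M (k + 1) * (1 + P k * Ω k)⁻¹ * P k * (M (k + 1))ᵀ) :
    ∀ k, IsUnit (1 + Theta M Ω k * P 0) ∧
      P k = Mres M 0 k * P 0 * (1 + Theta M Ω k * P 0)⁻¹ * (Mres M 0 k)ᵀ := by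
  have hunit (k : ℕ) : IsUnit (1 + Theta M Ω k * P 0) :=
    (posSemidef_Theta hΩ k).isUnit_one_add_mul_s8 hP0
  intro k
  refine ⟨hunit k, ?_⟩
  induction k with
  | zero => simp [Mres, Theta]
  | succ k ih =>
    have hB_succ : 1 + Theta M Ω (k + 1) * P 0
        = (1 + Theta M Ω k * P 0) + (Mres M 0 k)ᵀ * Ω k * Mres M 0 k * P 0 := by
      rw [Theta_succ, Matrix.add_mul, add_assoc]
    rw [hrec, ih, Matrix.mul_assoc (M (k + 1)), hB_succ,
      inv_one_add_mul_inv_mul (hunit k) (hB_succ ▸ hunit (k + 1)), Mres_zero_succ,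
      transpose_mul]
    simp only [Matrix.mul_assoc]

/-- Alternative closed form of the perfect-model Kalman filter covariance:
`P_k = M_{k:0} P_0 (I + Θ_k P_0)⁻¹ M_{k:0}ᵀ`, where `I + Θ_k P_0` is invertible. -/
theorem kf_closed_form_theta {n : ℕ}
    (M Ω : ℕ → Matrix (Fin n) (Fin n) ℝ)
    (hM : ∀ k, 1 ≤ k → IsUnit (M k)) (hΩ : ∀ k, (Ω k).PosSemidef)
    (P : ℕ → Matrix (Fin n) (Fin n) ℝ) (hP0 : (P 0).PosSemidef)
    (hrec : ∀ k, P (k + 1)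
      = M (k + 1) * (1 + P k * Ω k)⁻¹ * P k * (M (k + 1))ᵀ) :
    ∀ k, IsUnit (1 + Theta M Ω k * P 0) ∧
      P k = Mres M 0 k * P 0 * (1 + Theta M Ω k * P 0)⁻¹ * (Mres M 0 k)ᵀ :=
  kf_closed_form_theta_general M Ω hΩ P hP0 hrec
end
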